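/- arXiv:1903.10483 — 3 statements merged into one kernel-verified Lean document; each statement's English description precedes it below -/
import Mathlib

section
/- Let a, b, c, d be vectors in the Euclidean plane ℝ² with ‖a‖ = ‖b‖ = ‖c‖ = ‖d‖ = 1 and b − a = d − c ≠ 0. Then either (c = a and d = b), or (c = −b and d = −a). That is, two chords of the unit circle with the same nonzero edge vector either coincide or are mirror images of one another about the diameter parallel to that edge vector. -/
/-!
The midpoint sums `a + b` and `c + d` are both orthogonal to the common edge vector
`v = b - a`, since `⟪b - a, a + b⟫ = ‖b‖² - ‖a‖² = 0`, and the parallelogram law gives them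
the same norm. In the plane the vectors orthogonal to `v ≠ 0` form a line, so
`c + d = ±(a + b)`; together with `d - c = b - a` this pins down `c` and `d`.
-/

open Module RealInnerProductSpace

section

variable {F : Type*} [NormedAddCommGroup F] [InnerProductSpace ℝ F]

theorem inner_sub_add_eq_zero_of_norm_eq {a b : F} (h : ‖a‖ = ‖b‖) : ⟪b - a, a + b⟫ = 0 := by
  rw [real_inner_comm, add_comm]
  exact (real_inner_add_sub_eq_zero_iff b a).mpr h.symm

theorem norm_add_eq_norm_add_of_sub_eq {a b c d : F}
    (h : ‖a‖ ^ 2 + ‖b‖ ^ 2 = ‖c‖ ^ 2 + ‖d‖ ^ 2) (heq : b - a = d - c) :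
    ‖a + b‖ = ‖c + d‖ := by
  have hab := parallelogram_law_with_norm ℝ b a
  have hcd := parallelogram_law_with_norm ℝ d c
  rw [add_comm b, heq] at hab
  rw [add_comm d] at hcd
  exact (sq_eq_sq₀ (norm_nonneg _) (norm_nonneg _)).mp (by linarith)

theorem eq_or_eq_neg_of_norm_eq_of_inner_eq_zero [Fact (finrank ℝ F = 2)] {u v w : F}
    (hv : v ≠ 0) (hu : ⟪v, u⟫ = 0) (hw : ⟪v, w⟫ = 0) (h : ‖u‖ = ‖w‖) : u = w ∨ u = -w := by
  rcases eq_or_ne w 0 with rfl | hw0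
  · simp_all
  obtain ⟨t, rfl⟩ := Submodule.mem_span_singleton.mp
    (Submodule.mem_span_singleton_of_inner_eq_zero_of_inner_eq_zero hv hw0 hu hw)
  have ht : |t| = 1 := by
    simpa [norm_smul, norm_ne_zero_iff.mpr hw0] using h
  rcases (abs_eq zero_le_one).mp ht with rfl | rfl <;> simp

end

/-- Two chords of the unit circle with the same nonzero edge vector either coincide
or are mirror images of one another about the diameter parallel to that edge vector:
if `a, b, c, d` are unit vectors in the plane with `b − a = d − c ≠ 0`, then either
`c = a` and `d = b`, or `c = −b` and `d = −a`. -/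
theorem equal_chords_coincide_or_mirror
    (a b c d : EuclideanSpace ℝ (Fin 2))
    (ha : ‖a‖ = 1) (hb : ‖b‖ = 1) (hc : ‖c‖ = 1) (hd : ‖d‖ = 1)
    (heq : b - a = d - c) (hne : b - a ≠ 0) :
    (c = a ∧ d = b) ∨ (c = -b ∧ d = -a) := by
  have : Fact (finrank ℝ (EuclideanSpace ℝ (Fin 2)) = 2) := ⟨by simp⟩
  have hab := inner_sub_add_eq_zero_of_norm_eq (ha.trans hb.symm)
  have hcd := inner_sub_add_eq_zero_of_norm_eq (hc.trans hd.symm)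
  rw [← heq] at hcd
  have hsum := norm_add_eq_norm_add_of_sub_eq (by rw [ha, hb, hc, hd]) heq
  rcases eq_or_eq_neg_of_norm_eq_of_inner_eq_zero hne hcd hab hsum.symm with h | h
  · refine .inl ⟨?_, ?_⟩
    · linear_combination (norm := module) (1 / 2 : ℝ) • (h + heq)
    · linear_combination (norm := module) (1 / 2 : ℝ) • (h - heq)
  · refine .inr ⟨?_, ?_⟩
    · linear_combination (norm := module) (1 / 2 : ℝ) • (h + heq)
    · linear_combination (norm := module) (1 / 2 : ℝ) • (h - heq)
end

section
/- Let a, b, c, d be vectors in the Euclidean plane ℝ² with ‖a‖ = ‖b‖ = ‖c‖ = ‖d‖ = 1, whose second coordinates are all nonnegative (i.e., all four points lie on the closed upper half of the unit circle). Suppose b − a = d − c ≠ 0 and the chord from a to b is non-diametral, i.e., b ≠ −a. Then c = a and d = b. In other words, two equal (same edge vector) non-diametral chords cannot both lie in the upper half of the unit circle unless they coincide. -/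
/-!
If `b - a = d - c = v ≠ 0` for unit vectors, the midpoint directions `a + b` and `c + d` are
both orthogonal to `v` and have the same length (parallelogram law). In the plane the
orthogonal complement of `v` is a line, so `c + d = ±(a + b)`. The sign `+` gives `c = a`,
`d = b`; the sign `-` gives `c = -b`, `d = -a`, which puts all four points on the horizontal
axis, where two distinct unit vectors are antipodal.
-/

open Module RealInnerProductSpace

theorem eq_and_eq_of_add_eq_add_of_sub_eq_sub {G : Type*} [AddCommGroup G] [IsAddTorsionFree G]
    {x y x' y' : G} (hadd : x + y = x' + y') (hsub : y - x = y' - x') : x = x' ∧ y = y' := by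
  have hx : 2 • x = 2 • x' := by
    rw [two_nsmul, two_nsmul]
    calc x + x = (x + y) - (y - x) := by abel
      _ = x' + x' := by rw [hadd, hsub]; abel
  obtain rfl := IsAddTorsionFree.nsmul_right_injective two_ne_zero hx
  exact ⟨rfl, add_left_cancel hadd⟩

section InnerProductSpace

variable {E : Type*} [NormedAddCommGroup E] [InnerProductSpace ℝ E]

theorem norm_add_eq_of_sub_eq_of_norm_eq {a b c d : E} (hac : ‖a‖ = ‖c‖) (hbd : ‖b‖ = ‖d‖)
    (h : a - b = c - d) : ‖a + b‖ = ‖c + d‖ := by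
  have hab := parallelogram_law_with_norm ℝ a b
  have hcd := parallelogram_law_with_norm ℝ c d
  rw [h, hac, hbd] at hab
  exact (sq_eq_sq₀ (norm_nonneg _) (norm_nonneg _)).mp (by linarith)

theorem eq_or_eq_neg_of_inner_eq_zero_of_norm_eq (hE : finrank ℝ E = 2) {v x y : E}
    (hv : v ≠ 0) (hx : ⟪v, x⟫ = 0) (hy : ⟪v, y⟫ = 0) (h : ‖x‖ = ‖y‖) : y = x ∨ y = -x := by
  have : Fact (finrank ℝ E = 1 + 1) := ⟨hE⟩
  have hline : finrank ℝ (ℝ ∙ v)ᗮ = 1 := Submodule.finrank_orthogonal_span_singleton hv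
  rcases eq_or_ne x 0 with rfl | hx0
  · exact .inl (norm_eq_zero.mp (h.symm.trans norm_zero))
  have hxK : x ∈ (ℝ ∙ v)ᗮ := Submodule.mem_orthogonal_singleton_iff_inner_right.mpr hx
  have hyK : y ∈ (ℝ ∙ v)ᗮ := Submodule.mem_orthogonal_singleton_iff_inner_right.mpr hy
  obtain ⟨t, ht⟩ := (finrank_eq_one_iff_of_nonzero' (⟨x, hxK⟩ : (ℝ ∙ v)ᗮ)
    (by simpa using hx0)).mp hline ⟨y, hyK⟩
  obtain rfl : t • x = y := congrArg Subtype.val ht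
  have ht : |t| = 1 := by
    rw [norm_smul, Real.norm_eq_abs] at h
    exact (mul_eq_right₀ (norm_ne_zero_iff.mpr hx0)).mp h.symm
  rcases (abs_eq zero_le_one).mp ht with rfl | rfl <;> simp

end InnerProductSpace

/-- Two equal (same nonzero edge vector) non-diametral chords cannot both lie in the
closed upper half of the unit circle unless they coincide: if `a, b, c, d` are unit
vectors in the plane with nonnegative second coordinates, `b − a = d − c ≠ 0`,
and `b ≠ −a`, then `c = a` and `d = b`. -/
theorem equal_nondiametral_upper_chords_coincide
    (a b c d : EuclideanSpace ℝ (Fin 2))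
    (ha : ‖a‖ = 1) (hb : ‖b‖ = 1) (hc : ‖c‖ = 1) (hd : ‖d‖ = 1)
    (ha' : 0 ≤ a 1) (hb' : 0 ≤ b 1) (hc' : 0 ≤ c 1) (hd' : 0 ≤ d 1)
    (heq : b - a = d - c) (hne : b - a ≠ 0) (hnd : b ≠ -a) :
    c = a ∧ d = b := by
  have hE : finrank ℝ (EuclideanSpace ℝ (Fin 2)) = 2 := finrank_euclideanSpace_fin
  have : IsAddTorsionFree (EuclideanSpace ℝ (Fin 2)) := .of_isTorsionFree ℝ _
  have hab : ⟪b - a, a + b⟫ = 0 := by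
    rw [real_inner_comm, add_comm, real_inner_add_sub_eq_zero_iff, ha, hb]
  have hcd : ⟪b - a, c + d⟫ = 0 := by
    rw [heq, real_inner_comm, add_comm, real_inner_add_sub_eq_zero_iff, hc, hd]
  have hsum : ‖a + b‖ = ‖c + d‖ :=
    norm_add_eq_of_sub_eq_of_norm_eq (ha.trans hc.symm) (hb.trans hd.symm)
      (by rw [← neg_sub b a, heq, neg_sub])
  rcases eq_or_eq_neg_of_inner_eq_zero_of_norm_eq hE hne hab hcd hsum with hs | hs
  · exact eq_and_eq_of_add_eq_add_of_sub_eq_sub hs heq.symm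
  obtain ⟨rfl, rfl⟩ : c = -b ∧ d = -a :=
    eq_and_eq_of_add_eq_add_of_sub_eq_sub (by rw [hs]; abel) (by rw [← heq]; abel)
  have ha1 : a 1 = 0 := le_antisymm (by simpa using hd') ha'
  have hb1 : b 1 = 0 := le_antisymm (by simpa using hc') hb'
  rcases eq_or_eq_neg_of_inner_eq_zero_of_norm_eq hE (v := EuclideanSpace.single 1 1) (by simp)
      (by simp [EuclideanSpace.inner_single_left, ha1])
      (by simp [EuclideanSpace.inner_single_left, hb1]) (ha.trans hb.symm) with h | h
  · exact absurd (sub_eq_zero.mpr h) hne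
  · exact absurd h hnd
end

section
/- Fix an integer n ≥ 1 and define points p_k = (cos(kπ/n), sin(kπ/n)) ∈ ℝ² for k = 0, 1, …, n−1 (n equally spaced points on the upper half of the unit circle starting at (1,0)). Then the assignment of edge vectors to ordered pairs is injective: for indices 0 ≤ i, j, k, l ≤ n−1 with i ≠ j and k ≠ l, if p_j − p_i = p_l − p_k then i = k and j = l. -/
/-!
Identify `p m` with the unit complex number `u m = exp (i m π / n)`. The hypothesis says
`u j + u k = u l + u i =: s`. On the unit circle `conj u = u⁻¹`, so `u j * u k = s / conj s`
is determined by `s` as soon as `s ≠ 0`; then `{u j, u k}` and `{u l, u i}` are the root sets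
of the same quadratic. The sum cannot vanish because all angles lie in `[0, π)`, and
`m ↦ u m` is injective on `m < n`.
-/

open Complex ComplexConjugate Set

theorem eq_and_eq_or_eq_and_eq_of_add_eq_add_of_mul_eq_mul {R : Type*} [CommRing R]
    [NoZeroDivisors R] {a b c d : R} (hs : a + b = c + d) (hp : a * b = c * d) :
    (a = c ∧ b = d) ∨ (a = d ∧ b = c) := by
  have hroot : (a - c) * (a - d) = 0 := by linear_combination a * hs - hp
  rcases mul_eq_zero.1 hroot with hac | had
  · have hac := sub_eq_zero.1 hac
    exact Or.inl ⟨hac, by linear_combination hs - hac⟩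
  · have had := sub_eq_zero.1 had
    exact Or.inr ⟨had, by linear_combination hs - had⟩

theorem natCast_mul_pi_div_mem_Ico {m n : ℕ} (hm : m < n) :
    (m * Real.pi / n : ℝ) ∈ Ico 0 Real.pi := by
  have hn : (0 : ℝ) < n := by exact_mod_cast (Nat.zero_le m).trans_lt hm
  refine ⟨by positivity, ?_⟩
  rw [div_lt_iff₀ hn, mul_comm]
  exact mul_lt_mul_of_pos_left (by exact_mod_cast hm) Real.pi_pos

namespace Circle

theorem coe_mul_coe_mul_conj_add (x y : Circle) :
    (x : ℂ) * y * conj ((x : ℂ) + y) = x + y := by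
  rw [map_add, ← coe_inv_eq_conj, ← coe_inv_eq_conj, coe_inv, coe_inv]
  field_simp
  ring

theorem eq_and_eq_or_eq_and_eq_of_coe_add_eq {x y z w : Circle}
    (hs : (x : ℂ) + y = z + w) (hne : (x : ℂ) + y ≠ 0) :
    (x = z ∧ y = w) ∨ (x = w ∧ y = z) := by
  have hp : (x : ℂ) * y = z * w := by
    refine mul_right_cancel₀ ((map_ne_zero conj).2 hne) ?_
    rw [coe_mul_coe_mul_conj_add, hs, coe_mul_coe_mul_conj_add]
  simpa only [coe_inj] using eq_and_eq_or_eq_and_eq_of_add_eq_add_of_mul_eq_mul hs hp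

theorem coe_exp_add_coe_exp_ne_zero {a b : ℝ} (ha : a ∈ Ico 0 Real.pi)
    (hb : b ∈ Ico 0 Real.pi) : (exp a : ℂ) + exp b ≠ 0 := by
  intro h
  have hexp : exp b = exp (a + Real.pi) := by
    ext
    rw [exp_add, coe_mul, coe_exp Real.pi, exp_pi_mul_I]
    linear_combination h
  have := exp_injOn_Ico (a := 0) (b := 2 * Real.pi) (by linarith)
    ⟨hb.1, by linarith [hb.2, Real.pi_pos]⟩ ⟨by linarith [ha.1, Real.pi_pos], by linarith [ha.2]⟩
    hexp
  linarith [ha.1, hb.2]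

theorem injOn_exp_natCast_mul_pi_div (n : ℕ) :
    InjOn (fun m : ℕ ↦ exp (m * Real.pi / n)) (Iio n) := by
  intro m hm m' hm' h
  have hangle := exp_injOn_Ico (by linarith [Real.pi_pos])
    (natCast_mul_pi_div_mem_Ico hm) (natCast_mul_pi_div_mem_Ico hm') h
  have hn : (n : ℝ) ≠ 0 := by exact_mod_cast ((Nat.zero_le m).trans_lt hm).ne'
  rw [div_left_inj' hn, mul_left_inj' Real.pi_ne_zero] at hangle
  exact_mod_cast hangle

end Circle

open Circle in
theorem edge_vectors_injective_general
    (n : ℕ)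
    (p : ℕ → ℝ × ℝ)
    (hp : ∀ k : ℕ, p k = (Real.cos (k * Real.pi / n), Real.sin (k * Real.pi / n)))
    (i j k l : ℕ) (hi : i < n) (hj : j < n) (hk : k < n) (hl : l < n)
    (hij : i ≠ j)
    (h : p j - p i = p l - p k) :
    i = k ∧ j = l := by
  set u : ℕ → Circle := fun m ↦ exp (m * Real.pi / n)
  have hpu : ∀ m, p m = equivRealProdAddHom (u m) := fun m ↦ by
    rw [hp, equivRealProdAddHom_apply, coe_exp, exp_ofReal_mul_I_re, exp_ofReal_mul_I_im]
  have hsum : (u j : ℂ) + u k = u l + u i := by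
    apply equivRealProdAddHom.injective
    simpa only [map_add, ← hpu] using sub_eq_sub_iff_add_eq_add.1 h
  have hinj := injOn_exp_natCast_mul_pi_div n
  rcases eq_and_eq_or_eq_and_eq_of_coe_add_eq hsum
      (coe_exp_add_coe_exp_ne_zero (natCast_mul_pi_div_mem_Ico hj)
        (natCast_mul_pi_div_mem_Ico hk)) with ⟨hjl, hki⟩ | ⟨hji, -⟩
  · exact ⟨(hinj hk hi hki).symm, hinj hj hl hjl⟩
  · exact absurd (hinj hj hi hji).symm hij

/-- For `n` equally spaced points `p k = (cos(kπ/n), sin(kπ/n))`, `k = 0, …, n−1`, on the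
upper half of the unit circle, the assignment of edge vectors to ordered pairs is
injective: if `i ≠ j`, `k ≠ l` and `p j − p i = p l − p k` then `i = k` and `j = l`. -/
theorem edge_vectors_injective
    (n : ℕ) (hn : 1 ≤ n)
    (p : ℕ → ℝ × ℝ)
    (hp : ∀ k : ℕ, p k = (Real.cos (k * Real.pi / n), Real.sin (k * Real.pi / n)))
    (i j k l : ℕ) (hi : i < n) (hj : j < n) (hk : k < n) (hl : l < n)
    (hij : i ≠ j) (hkl : k ≠ l)
    (h : p j - p i = p l - p k) :
    i = k ∧ j = l :=
  edge_vectors_injective_general n p hp i j k l hi hj hk hl hij h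
end
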